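/- In the dihedral group D_n = ⟨x, y : xⁿ = y² = (xy)² = e⟩ for n > 2, the Pell-Narayana orbit s₀ = x, s₁ = y, s₂ = y², sₙ = sₙ₋₃·(sₙ₋₁)² satisfies s_{3i} = x, s_{3i+1} = y·x^{2i}, s_{3i+2} = e for all i ≥ 0, and its period is 3n/2 if n is even and 3n if n is odd. -/

import Mathlib

/-- The Pell-Narayana orbit of a group with generating pair (x, y):
s₀ = x, s₁ = y, s₂ = y², sₙ = sₙ₋₃ · (sₙ₋₁)² for n ≥ 3. -/
def PNorbit {G : Type*} [Group G] (x y : G) : ℕ → G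
  | 0 => x
  | 1 => y
  | 2 => y ^ 2
  | n + 3 => PNorbit x y n * (PNorbit x y (n + 2)) ^ 2


open DihedralGroup

lemma PNorbit_add3 {G : Type*} [Group G] (x y : G) (m : ℕ) :
    PNorbit x y (m + 3) = PNorbit x y m * (PNorbit x y (m + 2)) ^ 2 := rfl

lemma sr_sq {n : ℕ} (a : ZMod n) : (sr a : DihedralGroup n) ^ 2 = 1 := by
  rw [sq, sr_mul_self]

lemma key (n : ℕ) (i : ℕ) :
    PNorbit (r 1 : DihedralGroup n) (sr 0) (3 * i) = r 1 ∧
    PNorbit (r 1 : DihedralGroup n) (sr 0) (3 * i + 1) = sr ((2 * i : ℕ) : ZMod n) ∧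
    PNorbit (r 1 : DihedralGroup n) (sr 0) (3 * i + 2) = 1 := by
  induction i with
  | zero => exact ⟨rfl, by simp [PNorbit], by simp [PNorbit, sr_sq]⟩
  | succ i ih =>
    obtain ⟨h0, h1, h2⟩ := ih
    have e0 : PNorbit (r 1 : DihedralGroup n) (sr 0) (3 * (i+1)) = r 1 := by
      rw [show 3 * (i+1) = 3*i + 3 by ring, PNorbit_add3, h0, h2]
      simp
    refine ⟨e0, ?_, ?_⟩
    · rw [show 3 * (i+1) + 1 = (3*i+1) + 3 by ring, PNorbit_add3, h1,
        show 3*i+1+2 = 3*(i+1) by ring, e0]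
      rw [sq, r_mul_r, sr_mul_r]
      congr 1
      push_cast
      ring
    · rw [show 3 * (i+1) + 2 = (3*i+2) + 3 by ring, PNorbit_add3, h2,
        show 3*i+2+2 = 3*(i+1)+1 by ring]
      rw [show 3 * (i+1) + 1 = (3*i+1) + 3 by ring, PNorbit_add3, h1,
        show 3*i+1+2 = 3*(i+1) by ring, e0]
      simp [sq, mul_assoc, sr_mul_r, r_mul_r, sr_mul_sr, -r_zero, one_def]

theorem PNorbit_dihedral (n : ℕ) (hn : 2 < n) :
    (∀ i : ℕ,
      PNorbit (DihedralGroup.r 1 : DihedralGroup n) (DihedralGroup.sr 0) (3 * i)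
        = DihedralGroup.r 1 ∧
      PNorbit (DihedralGroup.r 1 : DihedralGroup n) (DihedralGroup.sr 0) (3 * i + 1)
        = DihedralGroup.sr 0 * (DihedralGroup.r 1) ^ (2 * i) ∧
      PNorbit (DihedralGroup.r 1 : DihedralGroup n) (DihedralGroup.sr 0) (3 * i + 2) = 1) ∧
    IsLeast {k : ℕ | 0 < k ∧ ∀ j : ℕ,
      PNorbit (DihedralGroup.r 1 : DihedralGroup n) (DihedralGroup.sr 0) (j + k)
        = PNorbit (DihedralGroup.r 1 : DihedralGroup n) (DihedralGroup.sr 0) j}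
      (if Even n then 3 * n / 2 else 3 * n) := by
  constructor
  · intro i
    obtain ⟨h0, h1, h2⟩ := key n i
    exact ⟨h0, by rw [h1, r_one_pow, sr_mul_r, zero_add], h2⟩
  · set m := if Even n then n / 2 else n with hm
    have hK : (if Even n then 3 * n / 2 else 3 * n) = 3 * m := by
      rcases Nat.even_or_odd n with he | ho
      · obtain ⟨t, rfl⟩ := he
        simp only [hm, if_pos (Even.add_self t)]
        omega
      · rw [hm, if_neg (Nat.not_even_iff_odd.mpr ho), if_neg (Nat.not_even_iff_odd.mpr ho)]
    have hmpos : 0 < m := by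
      rcases Nat.even_or_odd n with he | ho
      · simp only [hm, if_pos he]; omega
      · simp only [hm, if_neg (Nat.not_even_iff_odd.mpr ho)]; omega
    have hdvd : n ∣ 2 * m := by
      rcases Nat.even_or_odd n with he | ho
      · obtain ⟨t, rfl⟩ := he
        simp only [hm, if_pos (Even.add_self t)]
        exact ⟨1, by omega⟩
      · simp only [hm, if_neg (Nat.not_even_iff_odd.mpr ho)]
        exact ⟨2, by ring⟩
    have hcast : ((2 * m : ℕ) : ZMod n) = 0 :=
      (ZMod.natCast_eq_zero_iff _ _).mpr hdvd
    rw [hK]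
    constructor
    · refine ⟨by omega, fun j => ?_⟩
      obtain ⟨q, u, hu, rfl⟩ : ∃ q u, u < 3 ∧ j = 3 * q + u :=
        ⟨j / 3, j % 3, by omega, by omega⟩
      interval_cases u
      · rw [show 3*q+0+3*m = 3*(q+m) by ring, (key n (q+m)).1, show 3*q+0 = 3*q by ring,
          (key n q).1]
      · rw [show 3*q+1+3*m = 3*(q+m)+1 by ring, (key n (q+m)).2.1, (key n q).2.1]
        congr 1
        push_cast at hcast ⊢
        linear_combination hcast
      · rw [show 3*q+2+3*m = 3*(q+m)+2 by ring, (key n (q+m)).2.2, (key n q).2.2]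
    · rintro k ⟨hkpos, hk⟩
      obtain ⟨q, u, hu, rfl⟩ : ∃ q u, u < 3 ∧ k = 3 * q + u :=
        ⟨k / 3, k % 3, by omega, by omega⟩
      -- u must be 0
      have h0 := hk 0
      rw [zero_add] at h0
      have hs0 : PNorbit (r 1 : DihedralGroup n) (sr 0) 0 = r 1 := rfl
      rw [hs0] at h0
      interval_cases u
      · -- k = 3*q, q > 0; use j = 1
        have h1 := hk 1
        rw [show 1 + (3*q+0) = 3*q+1 by ring, (key n q).2.1] at h1
        have hs1 : PNorbit (r 1 : DihedralGroup n) (sr 0) 1 = sr 0 := rfl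
        rw [hs1] at h1
        have : ((2 * q : ℕ) : ZMod n) = 0 := by
          injection h1
        have hdq : n ∣ 2 * q := (ZMod.natCast_eq_zero_iff _ _).mp this
        rcases Nat.even_or_odd n with he | ho
        · obtain ⟨t, rfl⟩ := he
          simp only [hm, if_pos (Even.add_self t)]
          have : t ∣ q := by
            obtain ⟨c, hc⟩ := hdq
            have hc2 : 2 * q = 2 * (t * c) := by rw [hc]; ring
            exact ⟨c, by omega⟩
          have : t ≤ q := Nat.le_of_dvd (by omega) this
          omega
        · simp only [hm, if_neg (Nat.not_even_iff_odd.mpr ho)]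
          have : n ∣ q := (Nat.Coprime.dvd_of_dvd_mul_left
            (Nat.coprime_two_right.mpr ho) hdq)
          have := Nat.le_of_dvd (by omega) this
          omega
      · rw [show 3*q+1 = 3*q+1 by rfl, (key n q).2.1] at h0
        exact absurd h0 (by simp)
      · rw [(key n q).2.2] at h0
        rw [one_def] at h0
        have : ((1:ZMod n)) = 0 := by
          injection h0 with h; exact h.symm
        have h1n := (ZMod.natCast_eq_zero_iff 1 n).mp (by exact_mod_cast this)
        have := Nat.le_of_dvd one_pos h1n
        omega
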